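/- arXiv:1810.12892 — 2 statements merged into one kernel-verified Lean document; each statement's English description precedes it below -/
import Mathlib

section
/- Let D ∈ ℝ^{n×n} be diagonal positive definite and 𝒜 ∈ ℝ^{n×(n−1)} the incidence matrix of a connected acyclic graph (so null(𝒜ᵀ) = span(1_n), rank 𝒜 = n−1). Define G := [[D1_n, 𝒜],[1_n, 0]] ∈ ℝ^{2n×n} and G_⊥ := [1_n 1_nᵀ, −(1_nᵀ D 1_n) I_n] ∈ ℝ^{n×2n}. Then G_⊥ has full row rank and null(G_⊥) = range(G). -/
/-!
Since `𝒜ᵀ 1 = 0`, the range of `𝒜` lies in the hyperplane `1ᗮ`; as `𝒜` is injective with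
`n - 1` columns, a dimension count makes the two equal. A pair `(v, ω)` lies in `null(G_⊥)`
exactly when `ω` is the constant `c = (1ᵀ v) / d`, and then `v - c D1` has zero sum (because
`1ᵀ D1 = d`), so it lies in `range 𝒜`. Surjectivity of `G_⊥` only needs `d ≠ 0`.
-/

open Matrix

theorem Matrix.range_mulVecLin_eq_ker_dotProduct {K m k : Type*} [Field K] [Fintype m]
    [Fintype k] (A : Matrix m k K) (hA : Function.Injective A.mulVec) {w : m → K} (hw : w ≠ 0)
    (hAw : Aᵀ *ᵥ w = 0) (hcard : Fintype.card k + 1 = Fintype.card m) :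
    LinearMap.range A.mulVecLin = LinearMap.ker (dotProductBilin K K w) := by
  classical
  have hle : LinearMap.range A.mulVecLin ≤ LinearMap.ker (dotProductBilin K K w) := by
    rintro _ ⟨x, rfl⟩
    simp [dotProduct_mulVec, ← mulVec_transpose, hAw]
  have hf : dotProductBilin K K w ≠ 0 := by
    obtain ⟨i, hi⟩ := Function.ne_iff.mp hw
    exact fun h => hi (by simpa using LinearMap.congr_fun h (Pi.single i 1))
  refine Submodule.eq_of_le_of_finrank_eq hle ?_
  have hker := Module.Dual.finrank_ker_add_one_of_ne_zero hf
  rw [LinearMap.finrank_range_of_inj hA, Module.finrank_fintype_fun_eq_card]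
  rw [Module.finrank_fintype_fun_eq_card] at hker
  omega

section

variable {K m k : Type*} [Field K] [Fintype m] [Fintype k]

theorem surjective_ones_dotProduct_smul_sub_smul {d : K} (hd : d ≠ 0) :
    Function.Surjective
      (fun vw : (m → K) × (m → K) => (1 ⬝ᵥ vw.1) • (1 : m → K) - d • vw.2) :=
  fun y => ⟨(0, -d⁻¹ • y), by simp [smul_smul, hd]⟩

theorem setOf_ones_dotProduct_smul_sub_smul_eq_zero (A : Matrix m k K)
    (hA : Function.Injective A.mulVec) (hA1 : Aᵀ *ᵥ 1 = 0)
    (hcard : Fintype.card k + 1 = Fintype.card m) (p : m → K) (hp : 1 ⬝ᵥ p ≠ 0) :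
    {vw : (m → K) × (m → K) | (1 ⬝ᵥ vw.1) • (1 : m → K) - (1 ⬝ᵥ p) • vw.2 = 0}
      = {vw | ∃ (c : K) (x : k → K), vw.1 = c • p + A *ᵥ x ∧ vw.2 = fun _ => c} := by
  have h1 : (1 : m → K) ≠ 0 := fun h => hp (by simp [h])
  have hrange := A.range_mulVecLin_eq_ker_dotProduct hA h1 hA1 hcard
  ext ⟨v, w⟩
  simp only [Set.mem_ofPred_eq]
  constructor
  · intro h
    set c := (1 ⬝ᵥ v) / (1 ⬝ᵥ p)
    have hw : w = fun _ => c := funext fun i => by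
      have := congrFun h i
      simp only [Pi.sub_apply, Pi.smul_apply, Pi.one_apply, smul_eq_mul, mul_one,
        Pi.zero_apply] at this
      rw [eq_div_iff hp]
      linear_combination -this
    have hv : v - c • p ∈ LinearMap.ker (dotProductBilin K K 1) := by
      simp [dotProduct_sub, c, hp]
    rw [← hrange] at hv
    obtain ⟨x, hx⟩ := hv
    exact ⟨c, x, by rw [mulVecLin_apply] at hx; rw [hx]; abel, hw⟩
  · rintro ⟨c, x, rfl, rfl⟩
    funext i
    simp [dotProduct_mulVec, ← mulVec_transpose, hA1]
    ring

end

/-- With `D` diagonal positive definite and `𝒜` the incidence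
matrix of a connected acyclic graph, the matrix
`G = [[D1_n, 𝒜],[1_n, 0]]` and `G_⊥ = [1_n1_nᵀ, −(1_nᵀD1_n)I_n]` satisfy:
`G_⊥` has full row rank (the associated map is surjective) and
`null(G_⊥) = range(G)`.  Vectors in `ℝ^{2n}` are written as pairs `(v, ω)`. -/
theorem stmt12 {n : ℕ}
    (𝒜 : Matrix (Fin n) (Fin (n - 1)) ℝ)
    (h𝒜inj : ∀ x : Fin (n - 1) → ℝ, 𝒜.mulVec x = 0 → x = 0)
    (h𝒜ker : {ω : Fin n → ℝ | 𝒜ᵀ.mulVec ω = 0}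
              = {ω : Fin n → ℝ | ∃ c : ℝ, ω = fun _ => c})
    (dD : Fin n → ℝ) (hdD : ∀ i, 0 < dD i)
    (D : Matrix (Fin n) (Fin n) ℝ) (hD : D = Matrix.diagonal dD)
    (d : ℝ) (hd : d = (fun _ => (1 : ℝ)) ⬝ᵥ D.mulVec (fun _ => 1)) :
    Function.Surjective
      (fun vw : (Fin n → ℝ) × (Fin n → ℝ) =>
        (((fun _ => (1 : ℝ)) ⬝ᵥ vw.1) • (fun _ => (1 : ℝ)) - d • vw.2 : Fin n → ℝ))
    ∧ {vw : (Fin n → ℝ) × (Fin n → ℝ) |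
          ((fun _ => (1 : ℝ)) ⬝ᵥ vw.1) • (fun _ => (1 : ℝ)) - d • vw.2 = 0}
      = {vw : (Fin n → ℝ) × (Fin n → ℝ) |
          ∃ (c : ℝ) (x : Fin (n - 1) → ℝ),
            vw.1 = c • D.mulVec (fun _ => 1) + 𝒜.mulVec x
            ∧ vw.2 = (fun _ => c)} := by
  rcases n.eq_zero_or_pos with rfl | hn
  · exact ⟨fun _ => ⟨0, Subsingleton.elim _ _⟩,
      Set.ext fun _ => ⟨fun _ => ⟨0, 0, Subsingleton.elim _ _, Subsingleton.elim _ _⟩,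
        fun _ => Subsingleton.elim _ _⟩⟩
  have hd_pos : 0 < d := by
    rw [hd, hD]
    simpa [dotProduct, mulVec_diagonal] using
      Finset.sum_pos (fun i _ => hdD i) (Finset.univ_nonempty_iff.mpr ⟨⟨0, hn⟩⟩)
  have h𝒜1 : 𝒜ᵀ *ᵥ 1 = 0 :=
    (h𝒜ker ▸ ⟨1, rfl⟩ : (1 : Fin n → ℝ) ∈ {ω : Fin n → ℝ | 𝒜ᵀ *ᵥ ω = 0})
  have h𝒜_injective : Function.Injective 𝒜.mulVec :=
    (injective_iff_map_eq_zero 𝒜.mulVecLin).mpr h𝒜inj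
  refine ⟨surjective_ones_dotProduct_smul_sub_smul hd_pos.ne', ?_⟩
  subst hd
  exact setOf_ones_dotProduct_smul_sub_smul_eq_zero 𝒜 h𝒜_injective h𝒜1 (by simp only [Fintype.card_fin]; omega) _ hd_pos.ne'
end

section
/- Let G ∈ ℝ^{p×m} and G_w ∈ ℝ^{p×n_w}, let M ∈ ℝ^{p×p} be symmetric positive definite, H ∈ ℝ^{q×p}, L ∈ ℝ^{q×n_w}, w ∈ ℝ^{n_w}. Suppose (u*, λ*) ∈ ℝ^m × ℝ^q is an equilibrium of the primal-dual dynamics λ̇ = H(Gu + G_w w) − Lw, u̇ = −k Gᵀ(M(Gu + G_w w) + Hᵀλ) for some k > 0, i.e., H(Gu* + G_w w) = Lw and Gᵀ(M(Gu* + G_w w) + Hᵀλ*) = 0. Then y* := G u* + G_w w is an optimizer of: minimize ½ yᵀ M y subject to y ∈ { Gu + G_w w : u ∈ ℝ^m } and Hy = Lw. -/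
open Matrix

/-- An equilibrium `(u*, λ*)` of the primal-dual dynamics
`λ̇ = H(Gu + G_w w) − Lw`, `u̇ = −kGᵀ(M(Gu + G_w w) + Hᵀλ)` (with `k > 0`,
`M` symmetric positive definite) yields an optimizer
`y* = Gu* + G_w w` of: minimize `½yᵀMy` subject to
`y ∈ {Gu + G_w w : u}` and `Hy = Lw`. -/
theorem stmt19 {p m nw q : ℕ}
    (G : Matrix (Fin p) (Fin m) ℝ) (Gw : Matrix (Fin p) (Fin nw) ℝ)
    (M : Matrix (Fin p) (Fin p) ℝ) (hMsym : M.IsSymm)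
    (hMpd : ∀ v : Fin p → ℝ, v ≠ 0 → 0 < v ⬝ᵥ M.mulVec v)
    (H : Matrix (Fin q) (Fin p) ℝ) (L : Matrix (Fin q) (Fin nw) ℝ)
    (w : Fin nw → ℝ) (k : ℝ) (hk : 0 < k)
    (ustar : Fin m → ℝ) (lamstar : Fin q → ℝ)
    (ystar : Fin p → ℝ) (hystar : ystar = G.mulVec ustar + Gw.mulVec w)
    (heq1 : H.mulVec (G.mulVec ustar + Gw.mulVec w) = L.mulVec w)
    (heq2 : Gᵀ.mulVec (M.mulVec (G.mulVec ustar + Gw.mulVec w)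
              + Hᵀ.mulVec lamstar) = 0) :
    ((∃ u : Fin m → ℝ, ystar = G.mulVec u + Gw.mulVec w)
        ∧ H.mulVec ystar = L.mulVec w)
      ∧ ∀ y : Fin p → ℝ,
          (∃ u : Fin m → ℝ, y = G.mulVec u + Gw.mulVec w) →
          H.mulVec y = L.mulVec w →
          (1 : ℝ) / 2 * (ystar ⬝ᵥ M.mulVec ystar)
            ≤ (1 : ℝ) / 2 * (y ⬝ᵥ M.mulVec y) := by
  refine ⟨⟨⟨ustar, hystar⟩, by rw [hystar]; exact heq1⟩, ?_⟩
  intro y ⟨u, hy⟩ hHy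
  set d : Fin p → ℝ := y - ystar with hd
  have hdG : d = G.mulVec (u - ustar) := by
    rw [hd, hy, hystar, Matrix.mulVec_sub]; abel
  -- d ⬝ᵥ (M ystar + Hᵀ λ*) = 0
  have hKKT : d ⬝ᵥ (M.mulVec ystar + Hᵀ.mulVec lamstar) = 0 := by
    rw [hdG]
    rw [show (G.mulVec (u - ustar)) ⬝ᵥ (M.mulVec ystar + Hᵀ.mulVec lamstar)
        = (u - ustar) ⬝ᵥ Gᵀ.mulVec (M.mulVec ystar + Hᵀ.mulVec lamstar) by
      rw [Matrix.dotProduct_mulVec, ← Matrix.vecMul_transpose, dotProduct_comm]]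
    rw [hystar, heq2, dotProduct_zero]
  -- H d = 0
  have hHd : H.mulVec d = 0 := by
    rw [hd, Matrix.mulVec_sub, hHy, hystar, heq1, sub_self]
  have hdH : d ⬝ᵥ Hᵀ.mulVec lamstar = 0 := by
    rw [Matrix.dotProduct_mulVec, Matrix.vecMul_transpose, hHd, zero_dotProduct]
  have hdMy : d ⬝ᵥ M.mulVec ystar = 0 := by
    have := hKKT
    rw [dotProduct_add, hdH] at this
    linarith
  have hvm : ystar ᵥ* M = M *ᵥ ystar := by
    conv_lhs => rw [← hMsym.eq, Matrix.vecMul_transpose]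
  have hyMd : ystar ⬝ᵥ M.mulVec d = 0 := by
    rw [Matrix.dotProduct_mulVec, hvm, dotProduct_comm]
    exact hdMy
  have hdMd : 0 ≤ d ⬝ᵥ M.mulVec d := by
    by_cases h : d = 0
    · simp [h]
    · exact le_of_lt (hMpd d h)
  have hexp : y ⬝ᵥ M.mulVec y
      = ystar ⬝ᵥ M.mulVec ystar + ystar ⬝ᵥ M.mulVec d + d ⬝ᵥ M.mulVec ystar
        + d ⬝ᵥ M.mulVec d := by
    have hy' : y = ystar + d := by rw [hd]; abel
    rw [hy']
    simp only [Matrix.mulVec_add, dotProduct_add, add_dotProduct]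
    ring
  rw [hexp, hdMy, hyMd]
  linarith
end
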